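/- Let Σ = YX†XYᵀ have full singular value decomposition Σ = UΛUᵀ with distinct positive singular values σ₁ > ... > σ_r of multiplicities m₁, ..., m_r. Suppose A₂ = UVC where C is invertible and V = [diag(V₁,...,V_r, V̄), 0] with each Vᵢ ∈ ℝ^{mᵢ×pᵢ} and V̄ having orthonormal columns (V̄ in the zero-singular-value block). Then Tr(A₂A₂† Σ) = Σᵢ₌₁ʳ pᵢ σᵢ. -/

import Mathlib

/-
`A₂A₂†` is the unique symmetric matrix `Q` with `QA₂ = A₂` and `Q = A₂W` for some `W`. Since every
block of `V` has orthonormal columns, `VVᵀV = V`, and `U(VVᵀ)Uᵀ` is such a `Q`. Conjugating away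
`U`, the trace becomes `tr(VVᵀΛ)`; the zero block of `Λ` kills `V̄`, and block `i` contributes
`σᵢ tr(VᵢVᵢᵀ) = σᵢ tr(VᵢᵀVᵢ) = σᵢ pᵢ`.
-/

open Matrix

/-- `B` satisfies the four Penrose conditions for `A`, i.e. `B = A†`. -/
def Matrix.IsMoorePenrose {m n : Type*} [Fintype m] [Fintype n]
    (A : Matrix m n ℝ) (B : Matrix n m ℝ) : Prop :=
  A * B * A = A ∧ B * A * B = B ∧ (A * B)ᵀ = A * B ∧ (B * A)ᵀ = B * A

namespace Matrix

section MoorePenrose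

variable {k m n l : Type*} [Fintype k] [Fintype m] [Fintype n] [Fintype l]

theorem IsMoorePenrose.mul_eq_of_isSymm {A : Matrix m n ℝ} {B : Matrix n m ℝ}
    {Q : Matrix m m ℝ} {W : Matrix n m ℝ} (hAB : A.IsMoorePenrose B) (hQ : Q.IsSymm)
    (hQA : Q * A = A) (hAW : A * W = Q) : A * B = Q :=
  calc A * B = (Q * (A * B))ᵀ := by rw [← Matrix.mul_assoc, hQA, hAB.2.2.1]
    _ = A * B * Q := by rw [transpose_mul, hAB.2.2.1, hQ.eq]
    _ = Q := by rw [← hAW, ← Matrix.mul_assoc, hAB.1]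

theorem IsMoorePenrose.mul_eq_conj_mul_transpose [DecidableEq m] [DecidableEq n]
    {U : Matrix k m ℝ} {V : Matrix m n ℝ} {C : Matrix n l ℝ} {Cinv : Matrix l n ℝ}
    {B : Matrix l k ℝ} (hU : Uᵀ * U = 1) (hV : V * Vᵀ * V = V) (hC : C * Cinv = 1)
    (hB : (U * V * C).IsMoorePenrose B) :
    U * V * C * B = U * (V * Vᵀ) * Uᵀ := by
  refine hB.mul_eq_of_isSymm (W := Cinv * Vᵀ * Uᵀ) ?_ ?_ ?_
  · simp only [IsSymm, transpose_mul, transpose_transpose, Matrix.mul_assoc]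
  · calc U * (V * Vᵀ) * Uᵀ * (U * V * C) = U * (V * Vᵀ * (Uᵀ * U) * V) * C := by
          simp only [Matrix.mul_assoc]
      _ = U * V * C := by rw [hU, Matrix.mul_one, hV, Matrix.mul_assoc]
  · calc U * V * C * (Cinv * Vᵀ * Uᵀ) = U * V * (C * Cinv) * Vᵀ * Uᵀ := by
          simp only [Matrix.mul_assoc]
      _ = U * (V * Vᵀ) * Uᵀ := by rw [hC, Matrix.mul_one, Matrix.mul_assoc U]

end MoorePenrose

variable {α : Type*} [CommSemiring α]

theorem trace_conj_mul_conj {k m : Type*} [Fintype k] [Fintype m] [DecidableEq m]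
    {U : Matrix k m α} (hU : Uᵀ * U = 1) (P Q : Matrix m m α) :
    trace (U * P * Uᵀ * (U * Q * Uᵀ)) = trace (P * Q) := by
  rw [show U * P * Uᵀ * (U * Q * Uᵀ) = U * (P * (Uᵀ * U) * Q) * Uᵀ by
    simp only [Matrix.mul_assoc], hU, Matrix.mul_one, trace_mul_cycle, hU, Matrix.one_mul]

theorem trace_fromBlocks {m n : Type*} [Fintype m] [Fintype n] (A : Matrix m m α)
    (B : Matrix m n α) (C : Matrix n m α) (D : Matrix n n α) :
    trace (fromBlocks A B C D) = trace A + trace D := by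
  simp [trace, Fintype.sum_sum_type]

theorem fromBlocks_fromCols_zero_mul_transpose {m n m' n' z : Type*} [Fintype n] [Fintype n']
    [Fintype z] (A : Matrix m n α) (D : Matrix m' n' α) :
    fromBlocks A 0 0 (fromCols D (0 : Matrix m' z α)) *
        (fromBlocks A 0 0 (fromCols D (0 : Matrix m' z α)))ᵀ =
      fromBlocks (A * Aᵀ) 0 0 (D * Dᵀ) := by
  simp [fromBlocks_transpose, fromBlocks_multiply, transpose_fromCols, fromCols_mul_fromRows]

theorem trace_mul_transpose_of_transpose_mul_self_eq_one {m n : Type*} [Fintype m] [Fintype n]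
    [DecidableEq n] {M : Matrix m n α} (hM : Mᵀ * M = 1) :
    trace (M * Mᵀ) = Fintype.card n := by
  rw [trace_mul_comm, hM, trace_one]

theorem trace_blockDiagonal'_mul_transpose_mul_diagonal {ι : Type*} [Fintype ι] [DecidableEq ι]
    {m n : ι → Type*} [∀ i, Fintype (m i)] [∀ i, Fintype (n i)] [∀ i, DecidableEq (m i)]
    [∀ i, DecidableEq (n i)]
    {M : ∀ i, Matrix (m i) (n i) α} (hM : ∀ i, (M i)ᵀ * M i = 1) (σ : ι → α) :
    trace (blockDiagonal' M * (blockDiagonal' M)ᵀ * diagonal fun x => σ x.1) =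
      ∑ i, (Fintype.card (n i) : α) * σ i := by
  rw [blockDiagonal'_transpose, ← blockDiagonal'_mul,
    ← blockDiagonal'_diagonal fun i (_ : m i) => σ i, ← blockDiagonal'_mul, trace_blockDiagonal']
  refine Finset.sum_congr rfl fun i _ => ?_
  rw [← smul_one_eq_diagonal, Matrix.mul_smul, Matrix.mul_one, trace_smul,
    trace_mul_transpose_of_transpose_mul_self_eq_one (hM i), smul_eq_mul, mul_comm]

end Matrix

theorem trace_proj_sigma_eq_sum (r mbar pbar z d₀ mm : ℕ)
    (mfun pfun : Fin r → ℕ)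
    (σ : Fin r → ℝ)
    (Vb : ∀ i : Fin r, Matrix (Fin (mfun i)) (Fin (pfun i)) ℝ)
    (hVb : ∀ i, (Vb i)ᵀ * Vb i = 1)
    (Vbar : Matrix (Fin mbar) (Fin pbar) ℝ) (hVbar : Vbarᵀ * Vbar = 1)
    (V : Matrix ((Σ i : Fin r, Fin (mfun i)) ⊕ Fin mbar)
                ((Σ i : Fin r, Fin (pfun i)) ⊕ (Fin pbar ⊕ Fin z)) ℝ)
    (hV : V = fun x y =>
      match x, y with
      | Sum.inl ⟨i, a⟩, Sum.inl ⟨j, c⟩ =>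
          if h : j = i then Vb i a (Fin.cast (congrArg pfun h) c) else 0
      | Sum.inr a, Sum.inr (Sum.inl c) => Vbar a c
      | _, _ => 0)
    (Λ : Matrix ((Σ i : Fin r, Fin (mfun i)) ⊕ Fin mbar)
                ((Σ i : Fin r, Fin (mfun i)) ⊕ Fin mbar) ℝ)
    (hΛ : Λ = Matrix.diagonal
      (Sum.elim (fun x : Σ i : Fin r, Fin (mfun i) => σ x.1) (fun _ => (0 : ℝ))))
    (U : Matrix ((Σ i : Fin r, Fin (mfun i)) ⊕ Fin mbar)
                ((Σ i : Fin r, Fin (mfun i)) ⊕ Fin mbar) ℝ)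
    (hU₁ : Uᵀ * U = 1)
    (C Cinv : Matrix ((Σ i : Fin r, Fin (pfun i)) ⊕ (Fin pbar ⊕ Fin z))
                     ((Σ i : Fin r, Fin (pfun i)) ⊕ (Fin pbar ⊕ Fin z)) ℝ)
    (hC₁ : C * Cinv = 1)
    (X : Matrix (Fin d₀) (Fin mm) ℝ)
    (Y : Matrix ((Σ i : Fin r, Fin (mfun i)) ⊕ Fin mbar) (Fin mm) ℝ)
    (Xp : Matrix (Fin mm) (Fin d₀) ℝ)
    (hSVD : Y * Xp * X * Yᵀ = U * Λ * Uᵀ)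
    (A₂p : Matrix ((Σ i : Fin r, Fin (pfun i)) ⊕ (Fin pbar ⊕ Fin z))
                  ((Σ i : Fin r, Fin (mfun i)) ⊕ Fin mbar) ℝ)
    (hA₂p : (U * V * C).IsMoorePenrose A₂p) :
    ((U * V * C) * A₂p * (Y * Xp * X * Yᵀ)).trace
      = ∑ i : Fin r, (pfun i : ℝ) * σ i := by
  have hV_blocks :
      V = fromBlocks (blockDiagonal' Vb) 0 0 (fromCols Vbar (0 : Matrix _ (Fin z) ℝ)) := by
    subst hV
    ext (⟨i, a⟩ | a) (⟨j, c⟩ | c | c)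
    · by_cases h : j = i
      · subst h; simp
      · simp [h, blockDiagonal'_apply_ne _ _ _ (Ne.symm h)]
    all_goals rfl
  have hΛ_blocks : Λ = fromBlocks (diagonal fun x => σ x.1) 0 0 0 := by
    rw [hΛ, ← fromBlocks_diagonal, diagonal_zero]
  have hVVt :
      V * Vᵀ = fromBlocks (blockDiagonal' Vb * (blockDiagonal' Vb)ᵀ) 0 0 (Vbar * Vbarᵀ) := by
    rw [hV_blocks, fromBlocks_fromCols_zero_mul_transpose]
  have hV_partial : V * Vᵀ * V = V := by
    rw [hVVt, hV_blocks]
    simp [fromBlocks_multiply, blockDiagonal'_transpose, ← blockDiagonal'_mul, Matrix.mul_assoc,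
      hVb, hVbar]
  rw [hSVD, hA₂p.mul_eq_conj_mul_transpose hU₁ hV_partial hC₁, trace_conj_mul_conj hU₁, hVVt,
    hΛ_blocks, fromBlocks_multiply, trace_fromBlocks]
  simp only [Matrix.mul_zero, add_zero, trace_zero,
    trace_blockDiagonal'_mul_transpose_mul_diagonal hVb, Fintype.card_fin]
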